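/- For every natural number n ≥ 1 and every point x ∈ ℝ^n, there exist a unique proper subset I ⊊ {0,1,…,n} and a unique family of strictly positive real coefficients (λ_i)_{i∈I} such that x = Σ_{i∈I} λ_i·(−e_i). In particular, the cones σ_I with I ⊊ {0,1,…,n} cover ℝ^n (the fan L^n_n is complete) and their relative interiors partition ℝ^n. -/

import Mathlib

open Finset

/-- The generator `-e_i` of the fan, for `i ∈ {0,1,…,n}`:
for `i = 0` it is `-e_0 = e_1 + ⋯ + e_n`, and for `i ≥ 1` it is `-e_i`. -/
def negE (n : ℕ) (i : Fin (n + 1)) : Fin n → ℝ :=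
  fun j => if (i : ℕ) = 0 then 1 else if (j : ℕ) + 1 = (i : ℕ) then -1 else 0

/-- The cone `σ_I`: all nonnegative combinations of the vectors `-e_i`, `i ∈ I`. -/
def sigmaCone (n : ℕ) (I : Finset (Fin (n + 1))) : Set (Fin n → ℝ) :=
  { x | ∃ lam : Fin (n + 1) → ℝ, (∀ i, 0 ≤ lam i) ∧ x = ∑ i ∈ I, lam i • negE n i }

/-- The relative interior of `σ_I`: combinations with strictly positive coefficients. -/
def relintCone (n : ℕ) (I : Finset (Fin (n + 1))) : Set (Fin n → ℝ) :=
  { x | ∃ lam : Fin (n + 1) → ℝ, (∀ i ∈ I, 0 < lam i) ∧ x = ∑ i ∈ I, lam i • negE n i }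

/-- The support `|L^n_k|`: the union of the cones `σ_I` over proper subsets
`I ⊊ {0,1,…,n}` with `|I| ≤ k`. -/
def suppL (n k : ℕ) : Set (Fin n → ℝ) :=
  ⋃ I ∈ { I : Finset (Fin (n + 1)) | I ≠ Finset.univ ∧ I.card ≤ k }, sigmaCone n I

/-- The `j`-th extended coordinate of `x`, for `j ∈ {0,1,…,n}`, with `x_0 := 0`. -/
def coordX {n : ℕ} (x : Fin n → ℝ) (j : Fin (n + 1)) : ℝ :=
  if h : (j : ℕ) = 0 then 0 else x ⟨(j : ℕ) - 1, by have := j.isLt; omega⟩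

/-- The tropical polynomial `f(x) = max(0, x_1, …, x_n)`. -/
def tropF {n : ℕ} (x : Fin n → ℝ) : ℝ :=
  (Finset.univ : Finset (Fin (n + 1))).sup' Finset.univ_nonempty (coordX x)

/-
Writing `x = Σ_i λ_i • (-e_i)` with `λ` supported on `I` coordinatewise gives
`x_j = λ_0 - λ_j`, i.e. `λ_i = λ_0 - x_i` for all `i`, with the convention `x_0 = 0`.
Nonnegativity of `λ` forces `λ_0 ≥ max(0, x_1, …, x_n)`, and properness of `I` means some
`λ_i` vanishes, forcing equality. So `λ = f(x) - x` for the tropical polynomial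
`f(x) = max(0, x_1, …, x_n)`, and `I` is the support of `λ`; conversely this `λ` works.
-/

lemma coordX_zero {n : ℕ} (x : Fin n → ℝ) : coordX x 0 = 0 := by
  simp [coordX]

lemma coordX_succ {n : ℕ} (x : Fin n → ℝ) (j : Fin n) : coordX x j.succ = x j := by
  simp [coordX]

lemma negE_zero (n : ℕ) : negE n 0 = 1 := by
  ext j
  simp [negE]

lemma negE_succ (n : ℕ) (i : Fin n) : negE n i.succ = -Pi.single i 1 := by
  ext j
  by_cases h : j = i
  · subst h
    simp [negE]
  · have : (j : ℕ) ≠ i := fun hji => h (Fin.ext hji)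
    simp [negE, h, this]

lemma sum_smul_negE_apply (n : ℕ) (μ : Fin (n + 1) → ℝ) (j : Fin n) :
    (∑ i, μ i • negE n i) j = μ 0 - μ j.succ := by
  simp [Fin.sum_univ_succ, negE_zero, negE_succ, Finset.sum_apply, Pi.single_apply,
    sub_eq_add_neg]

lemma eq_sum_smul_negE_iff {n : ℕ} (x : Fin n → ℝ) (μ : Fin (n + 1) → ℝ) :
    x = ∑ i, μ i • negE n i ↔ ∀ i, coordX x i = μ 0 - μ i := by
  simp only [funext_iff, sum_smul_negE_apply, Fin.forall_fin_succ, coordX_zero, coordX_succ,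
    sub_self, true_and]

lemma sum_smul_negE_eq_sum_univ {n : ℕ} {J : Finset (Fin (n + 1))} {μ : Fin (n + 1) → ℝ}
    (hout : ∀ i ∉ J, μ i = 0) : ∑ i ∈ J, μ i • negE n i = ∑ i, μ i • negE n i :=
  Fintype.sum_subset fun i hi => by_contra fun hiJ => hi (by rw [hout i hiJ, zero_smul])

lemma coordX_le_tropF {n : ℕ} (x : Fin n → ℝ) (i : Fin (n + 1)) : coordX x i ≤ tropF x :=
  le_sup' (coordX x) (mem_univ i)

def reprCoeff {n : ℕ} (x : Fin n → ℝ) (i : Fin (n + 1)) : ℝ :=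
  tropF x - coordX x i

lemma reprCoeff_nonneg {n : ℕ} (x : Fin n → ℝ) (i : Fin (n + 1)) : 0 ≤ reprCoeff x i :=
  sub_nonneg.2 (coordX_le_tropF x i)

lemma exists_reprCoeff_eq_zero {n : ℕ} (x : Fin n → ℝ) : ∃ i, reprCoeff x i = 0 := by
  obtain ⟨i, -, hi⟩ := exists_mem_eq_sup' univ_nonempty (coordX x)
  exact ⟨i, sub_eq_zero.2 hi⟩

lemma eq_sum_reprCoeff_smul_negE {n : ℕ} (x : Fin n → ℝ) :
    x = ∑ i, reprCoeff x i • negE n i := by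
  rw [eq_sum_smul_negE_iff]
  intro i
  simp only [reprCoeff, coordX_zero]
  ring

lemma eq_reprCoeff_of_eq_sum_smul_negE {n : ℕ} {x : Fin n → ℝ} {J : Finset (Fin (n + 1))}
    {μ : Fin (n + 1) → ℝ} (hJ : J ≠ univ) (hpos : ∀ i ∈ J, 0 < μ i)
    (hout : ∀ i ∉ J, μ i = 0) (hx : x = ∑ i ∈ J, μ i • negE n i) : μ = reprCoeff x := by
  rw [sum_smul_negE_eq_sum_univ hout, eq_sum_smul_negE_iff] at hx
  have hμ_nonneg (i) : 0 ≤ μ i := by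
    by_cases hi : i ∈ J
    exacts [(hpos i hi).le, (hout i hi).ge]
  obtain ⟨i₀, hi₀⟩ : ∃ i, i ∉ J := by simpa [eq_univ_iff_forall] using hJ
  have hμ0 : μ 0 = tropF x := by
    refine le_antisymm ?_ (sup'_le _ _ fun i _ => ?_)
    · simpa [hout i₀ hi₀] using (hx i₀).symm.trans_le (coordX_le_tropF x i₀)
    · linarith [hx i, hμ_nonneg i]
  funext i
  simp only [reprCoeff]
  linarith [hx i]

lemma filter_pos_eq_of_pos_of_eq_zero {α : Type*} [Fintype α] {J : Finset α} {μ : α → ℝ}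
    (hpos : ∀ i ∈ J, 0 < μ i) (hout : ∀ i ∉ J, μ i = 0) : univ.filter (0 < μ ·) = J := by
  ext i
  by_cases hi : i ∈ J <;> simp [hi, hpos, hout]

theorem sigmaCone_unique_representation_general (n : ℕ) (x : Fin n → ℝ) :
    (∃! p : Finset (Fin (n + 1)) × (Fin (n + 1) → ℝ),
      p.1 ≠ Finset.univ ∧ (∀ i ∈ p.1, 0 < p.2 i) ∧ (∀ i ∉ p.1, p.2 i = 0) ∧
        x = ∑ i ∈ p.1, p.2 i • negE n i) ∧
    x ∈ ⋃ I ∈ { I : Finset (Fin (n + 1)) | I ≠ Finset.univ }, sigmaCone n I := by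
  set I : Finset (Fin (n + 1)) := univ.filter (0 < reprCoeff x ·)
  have hI_pos : ∀ i ∈ I, 0 < reprCoeff x i := fun i hi => (mem_filter.1 hi).2
  have hI_zero : ∀ i ∉ I, reprCoeff x i = 0 := fun i hi =>
    (not_lt.1 fun h => hi (mem_filter.2 ⟨mem_univ i, h⟩)).antisymm (reprCoeff_nonneg x i)
  have hx : x = ∑ i ∈ I, reprCoeff x i • negE n i := by
    rw [sum_smul_negE_eq_sum_univ hI_zero]
    exact eq_sum_reprCoeff_smul_negE x
  have hI : I ≠ univ := fun hIu => by
    obtain ⟨i, hi⟩ := exists_reprCoeff_eq_zero x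
    exact (hI_pos i (hIu ▸ mem_univ i)).ne' hi
  refine ⟨⟨(I, reprCoeff x), ⟨hI, hI_pos, hI_zero, hx⟩, ?_⟩,
    Set.mem_biUnion hI ⟨reprCoeff x, reprCoeff_nonneg x, hx⟩⟩
  rintro ⟨J, μ⟩ ⟨hJ, hpos, hout, hxJ⟩
  obtain rfl := eq_reprCoeff_of_eq_sum_smul_negE hJ hpos hout hxJ
  exact Prod.ext (filter_pos_eq_of_pos_of_eq_zero hpos hout).symm rfl

/-- Every `x ∈ ℝ^n` has a unique representation
`x = Σ_{i ∈ I} λ_i • (-e_i)` with `I ⊊ {0,1,…,n}` proper and all `λ_i > 0`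
(coefficients normalized to vanish outside `I`). In particular the cones `σ_I`
cover `ℝ^n`. -/
theorem sigmaCone_unique_representation (n : ℕ) (hn : 1 ≤ n) (x : Fin n → ℝ) :
    (∃! p : Finset (Fin (n + 1)) × (Fin (n + 1) → ℝ),
      p.1 ≠ Finset.univ ∧ (∀ i ∈ p.1, 0 < p.2 i) ∧ (∀ i ∉ p.1, p.2 i = 0) ∧
        x = ∑ i ∈ p.1, p.2 i • negE n i) ∧
    x ∈ ⋃ I ∈ { I : Finset (Fin (n + 1)) | I ≠ Finset.univ }, sigmaCone n I :=
  sigmaCone_unique_representation_general n x
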